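/- Let 1 < λ ≤ κ be cardinals with κ regular and uncountable. Then the poset ℚ(κ,<λ) is ω₁-closed (every countable decreasing sequence of conditions has a lower bound) and κ-strategically closed (Player II has a winning strategy in the game G_κ(ℚ(κ,<λ))). -/

import Mathlib

noncomputable section

open Cardinal Set

namespace Paper

/-- `C` is a club (closed and unbounded set) in the ordinal `α`. -/
def IsClubIn (C : Set Ordinal) (α : Ordinal) : Prop :=
  C ⊆ Set.Iio α ∧ (∀ γ < α, ∃ β ∈ C, γ ≤ β) ∧
    ∀ γ < α, 0 < γ → sSup (C ∩ Set.Iio γ) = γ → γ ∈ C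

/-- `γ` is a limit point of `C`: it belongs to `C` and is the supremum of the
earlier elements of `C`. -/
def IsLimitPt (γ : Ordinal) (C : Set Ordinal) : Prop :=
  γ ∈ C ∧ sSup (C ∩ Set.Iio γ) = γ

/-- An even ordinal: of the form `α + 2n` with `α` zero or a limit ordinal.
In particular all limit ordinals and `0` are even. -/
def EvenOrd (ξ : Ordinal) : Prop :=
  ∃ (α : Ordinal) (n : ℕ), (α = 0 ∨ Order.IsSuccLimit α) ∧ ξ = α + 2 * (n : Ordinal)

/-- `σ` is a winning strategy for Player II in the game `G_β` on `(P, le)`: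
`σ` depends only on the play so far, and whenever `0 < ξ < β` is an even stage
and the play so far is a decreasing sequence of conditions in which II has
followed `σ` at all earlier even stages, then `σ` produces a legal move, i.e.
a lower bound for the play so far.  (Stage `0`, where II plays the trivial
top condition `1`, is ignored; this is the standard reading for posets
without a maximum element.) -/
def IsWinningStratII {P : Type*} (le : P → P → Prop) (β : Ordinal)
    (σ : (Ordinal → P) → Ordinal → P) : Prop :=
  (∀ f g ξ, (∀ η < ξ, f η = g η) → σ f ξ = σ g ξ) ∧
  ∀ (f : Ordinal → P) (ξ : Ordinal), 0 < ξ → ξ < β → EvenOrd ξ →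
    (∀ η₁ η₂, 0 < η₁ → η₁ < η₂ → η₂ < ξ → le (f η₂) (f η₁)) →
    (∀ η, 0 < η → η < ξ → EvenOrd η → f η = σ f η) →
    ∀ η, 0 < η → η < ξ → le (σ f ξ) (f η)

/-- `(P, le)` is `β`-strategically closed: Player II has a winning strategy
in the game `G_β(P)`. -/
def StratClosed (P : Type*) (le : P → P → Prop) (β : Ordinal) : Prop :=
  ∃ σ, IsWinningStratII le β σ

/-- A condition in the poset `ℚ(kap, <lam)`: a sequence `⟨𝓒 α : α ≤ top⟩`
with `top < kap`, where for each limit `α ≤ top`, `𝓒 α` is a collection of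
clubs in `α` with `1 ≤ |𝓒 α| < lam`, coherent at limit points. -/
structure QCond (kap lam : Cardinal.{0}) where
  top : Ordinal
  C : Ordinal → Set (Set Ordinal)
  top_lt : top < kap.ord
  clubs : ∀ α ≤ top, Order.IsSuccLimit α →
    (C α).Nonempty ∧ (∀ c ∈ C α, IsClubIn c α) ∧ #(C α) < Cardinal.lift.{1} lam
  coherent : ∀ α β, α < β → β ≤ top → Order.IsSuccLimit α → Order.IsSuccLimit β →
    ∀ c ∈ C β, IsLimitPt α c → c ∩ Set.Iio α ∈ C α

/-- The order on `ℚ(kap, <lam)`: `QExt q p` means `q ≤ p`, i.e. `q`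
end-extends `p`. -/
def QExt {kap lam : Cardinal.{0}} (q p : QCond kap lam) : Prop :=
  p.top ≤ q.top ∧ ∀ α ≤ p.top, Order.IsSuccLimit α → q.C α = p.C α

namespace Aux

open Ordinal

theorem evenOrd_zero : EvenOrd 0 := ⟨0, 0, Or.inl rfl, by simp⟩

theorem evenOrd_of_isLimit {α : Ordinal} (h : Order.IsSuccLimit α) : EvenOrd α :=
  ⟨α, 0, Or.inr h, by simp⟩

theorem evenOrd_add_two {ν : Ordinal} (h : EvenOrd ν) : EvenOrd (ν + 2) := by
  obtain ⟨α, n, hα, rfl⟩ := h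
  exact ⟨α, n + 1, hα, by rw [Nat.cast_add, Nat.cast_one, mul_add, mul_one, ← add_assoc]⟩

theorem evenOrd_or_succ (ν : Ordinal) : EvenOrd ν ∨ EvenOrd (ν + 1) := by
  induction ν using Ordinal.limitRecOn with
  | zero => exact Or.inl evenOrd_zero
  | add_one ν ih =>
    rcases ih with h | h
    · right
      have h2 := evenOrd_add_two h
      rw [show (2 : Ordinal) = 1 + 1 from (one_add_one_eq_two).symm, ← add_assoc] at h2
      simpa using h2
    · exact Or.inl (by simpa using h)
  | limit ν hν _ => exact Or.inl (evenOrd_of_isLimit hν)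

theorem not_evenOrd_one : ¬ EvenOrd 1 := by
  rintro ⟨α, n, hα, h1⟩
  rcases hα with rfl | hα
  · rw [zero_add] at h1
    have : ((1 : ℕ) : Ordinal) = ((2 * n : ℕ) : Ordinal) := by push_cast; exact h1
    have := Nat.cast_injective (R := Ordinal) this
    omega
  · have : α ≤ 1 := le_trans (le_add_right (le_refl α)) h1.ge
    exact absurd (Ordinal.one_lt_of_isSuccLimit hα) (not_lt.mpr this)

theorem one_lt_of_evenOrd {ξ : Ordinal} (h : EvenOrd ξ) (h0 : 0 < ξ) : 1 < ξ := by
  have h1 : 1 ≤ ξ := Order.one_le_iff_pos.mpr h0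
  rcases h1.lt_or_eq with h' | h'
  · exact h'
  · exact absurd (h'.symm ▸ h) not_evenOrd_one

theorem QExt_refl {kap lam : Cardinal.{0}} (p : QCond kap lam) : QExt p p :=
  ⟨le_rfl, fun _ _ _ => rfl⟩

theorem QExt_trans {kap lam : Cardinal.{0}} {r q p : QCond kap lam}
    (hrq : QExt r q) (hqp : QExt q p) : QExt r p :=
  ⟨hqp.1.trans hrq.1, fun α hα hl =>
    (hrq.2 α (hα.trans hqp.1) hl).trans (hqp.2 α hα hl)⟩

theorem one_lt_lift {lam : Cardinal.{0}} (h1 : 1 < lam) : 1 < Cardinal.lift.{1} lam := by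
  have := (Cardinal.lift_lt.{0,1} (a := 1) (b := lam)).mpr h1
  simpa using this

theorem omega_closed {kap lam : Cardinal.{0}} (h1 : 1 < lam)
    (hreg : kap.IsRegular) (hunc : ℵ₀ < kap)
    (f : ℕ → QCond kap lam) (hf : ∀ n, QExt (f (n + 1)) (f n)) :
    ∃ q : QCond kap lam, ∀ n, QExt q (f n) := by
  classical
  have chain : ∀ m n : ℕ, m ≤ n → QExt (f n) (f m) := by
    intro m n h
    induction h with
    | refl => exact QExt_refl _
    | step h ih => exact QExt_trans (hf _) ih
  by_cases hB : ∃ N, ∀ n, (f n).top ≤ (f N).top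
  · obtain ⟨N, hN⟩ := hB
    refine ⟨f N, fun n => ?_⟩
    rcases le_total n N with h | h
    · exact chain n N h
    · have h2 := chain N n h
      exact ⟨hN n, fun α hα hl => ((h2.2 α (hα.trans (hN n)) hl)).symm⟩
  · push_neg at hB
    have hB' : ∀ N, ∃ n, (f N).top < (f n).top := hB
    have hbdd : BddAbove (Set.range fun n => (f n).top) := Ordinal.bddAbove_range _
    set γ := ⨆ n, (f n).top with hγ
    have hle : ∀ n, (f n).top ≤ γ := fun n => le_ciSup hbdd n
    have hlt : ∀ n, (f n).top < γ := by
      intro n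
      obtain ⟨m, hm⟩ := hB' n
      exact lt_of_lt_of_le hm (hle m)
    have hγpos : 0 < γ := lt_of_le_of_lt zero_le (hlt 0)
    have hlim : Order.IsSuccLimit γ := by
      refine Ordinal.isSuccLimit_iff.mpr ⟨hγpos.ne', Order.isSuccPrelimit_iff_succ_lt.mpr fun a ha => ?_⟩
      obtain ⟨n, hn⟩ := (lt_ciSup_iff hbdd).mp ha
      exact lt_of_le_of_lt (Order.succ_le_iff.mpr hn) (hlt n)
    have hmono : ∀ m n : ℕ, (f m).top < (f n).top → m < n := by
      intro m n h
      by_contra h'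
      exact absurd ((chain n m (not_lt.mp h')).1) (not_le.mpr h)
    set D : Set Ordinal := Set.range fun n => (f n).top with hD
    have hkey : ∀ γ' < γ, (D ∩ Set.Iio γ').Nonempty → sSup (D ∩ Set.Iio γ') ∈ D ∩ Set.Iio γ' := by
      intro γ' hγ' hne
      obtain ⟨m, hm⟩ := (lt_ciSup_iff hbdd).mp hγ'
      have hfin : (D ∩ Set.Iio γ').Finite := by
        have hsub : (D ∩ Set.Iio γ') ⊆ (fun n => (f n).top) '' (Set.Iio m) := by
          rintro β ⟨⟨n, rfl⟩, hβ2⟩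
          exact ⟨n, hmono n m (lt_trans hβ2 hm), rfl⟩
        exact Set.Finite.subset ((Set.finite_Iio m).image _) hsub
      exact hne.csSup_mem hfin
    have hclub : IsClubIn D γ := by
      refine ⟨?_, ?_, ?_⟩
      · rintro β ⟨n, rfl⟩; exact hlt n
      · intro γ' hγ'
        obtain ⟨n, hn⟩ := (lt_ciSup_iff hbdd).mp hγ'
        exact ⟨(f n).top, ⟨n, rfl⟩, hn.le⟩
      · intro γ' hγ' h0 hsup
        rcases Set.eq_empty_or_nonempty (D ∩ Set.Iio γ') with he | hne
        · rw [he] at hsup; rw [csSup_empty] at hsup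
          exact absurd hsup.symm h0.ne'
        · have := hkey γ' hγ' hne
          rw [hsup] at this
          exact absurd this.2 (lt_irrefl γ')
    set Cq : Ordinal → Set (Set Ordinal) :=
      fun α => if h : ∃ n, α ≤ (f n).top then (f h.choose).C α else {D} with hCq
    have agree : ∀ α, Order.IsSuccLimit α → ∀ n, α ≤ (f n).top → Cq α = (f n).C α := by
      intro α hα n hn
      have h : ∃ n, α ≤ (f n).top := ⟨n, hn⟩
      rw [hCq]; simp only [dif_pos h]
      rcases le_total h.choose n with h' | h'
      · exact ((chain _ _ h').2 α h.choose_spec hα).symm ▸ rfl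
      · exact (chain _ _ h').2 α hn hα
    have hCqγ : Cq γ = {D} := by
      rw [hCq]
      have : ¬ ∃ n, γ ≤ (f n).top := by
        rintro ⟨n, hn⟩; exact absurd (hlt n) (not_lt.mpr hn)
      simp only [dif_neg this]
    have hltγ : ∀ α, α < γ → ∃ n, α ≤ (f n).top := by
      intro α hα
      obtain ⟨n, hn⟩ := (lt_ciSup_iff hbdd).mp hα
      exact ⟨n, hn.le⟩
    refine ⟨⟨γ, Cq, ?_, ?_, ?_⟩, fun n => ⟨(hlt n).le, fun α hα hl => agree α hl n hα⟩⟩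
    · -- γ < kap.ord
      exact Cardinal.iSup_lt_ord_of_isRegular hreg (by simpa using hunc) fun n => (f n).top_lt
    · -- clubs
      intro α hαle hαlim
      rcases lt_or_eq_of_le hαle with hα | rfl
      · obtain ⟨n, hn⟩ := hltγ α hα
        rw [agree α hαlim n hn]
        exact (f n).clubs α hn hαlim
      · rw [hCqγ]
        refine ⟨⟨D, rfl⟩, ?_, ?_⟩
        · rintro c rfl
          exact hclub
        · rw [Cardinal.mk_singleton]
          exact one_lt_lift h1
    · -- coherent
      intro α β hαβ hβle hαlim hβlim c hc hlp
      rcases lt_or_eq_of_le hβle with hβ | rfl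
      · obtain ⟨n, hn⟩ := hltγ β hβ
        rw [agree β hβlim n hn] at hc
        have := (f n).coherent α β hαβ hn hαlim hβlim c hc hlp
        rwa [agree α hαlim n (hαβ.le.trans hn)]
      · rw [hCqγ] at hc
        rw [Set.mem_singleton_iff] at hc
        subst hc
        rcases Set.eq_empty_or_nonempty (D ∩ Set.Iio α) with he | hne
        · have h2 := hlp.2
          rw [he, csSup_empty] at h2
          exact absurd h2.symm hαlim.pos.ne'
        · have := hkey α hαβ hne
          rw [hlp.2] at this
          exact absurd this.2 (lt_irrefl α)

section Strat

variable {kap lam : Cardinal.{0}}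

open Classical in
/-- sup of the tops of the conditions played before stage `ξ`. -/
def del (f : Ordinal → QCond kap lam) (ξ : Ordinal) : Ordinal :=
  Ordinal.bsup ξ (fun η _ => if 0 < η then (f η).top else 0)

def gam (f : Ordinal → QCond kap lam) (ξ : Ordinal) : Ordinal :=
  del f ξ + Ordinal.omega0

/-- The canonical club that Player II commits to at stage `ξ`. -/
def Eset (f : Ordinal → QCond kap lam) (ξ : Ordinal) : Set Ordinal :=
  {β | (∃ η, 0 < η ∧ η < ξ ∧ EvenOrd η ∧ del f η ≤ β ∧ β ≤ gam f η) ∨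
    (del f ξ ≤ β ∧ β < gam f ξ)}

def Dec (f : Ordinal → QCond kap lam) (ξ : Ordinal) : Prop :=
  ∀ η₁ η₂, 0 < η₁ → η₁ < η₂ → η₂ < ξ → QExt (f η₂) (f η₁)

def Fresh (f : Ordinal → QCond kap lam) (ξ : Ordinal) : Prop :=
  ∀ ν, 0 < ν → ν < ξ → (f ν).top < del f ξ

def Inv (f : Ordinal → QCond kap lam) (ξ : Ordinal) : Prop :=
  ∀ η, 0 < η → η < ξ → EvenOrd η →
    (f η).top = gam f η ∧ (f η).C (gam f η) = {Eset f η} ∧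
      (Fresh f η → (f η).C (del f η) = {Eset f η ∩ Set.Iio (del f η)})

def Good (f : Ordinal → QCond kap lam) (ξ : Ordinal) : Prop :=
  0 < ξ ∧ ξ < kap.ord ∧ EvenOrd ξ ∧ Dec f ξ ∧ Inv f ξ

variable {f g : Ordinal → QCond kap lam} {ξ η μ ν : Ordinal}

theorem top_le_del (h0 : 0 < η) (hlt : η < ξ) : (f η).top ≤ del f ξ := by
  have := Ordinal.le_bsup (fun η (_ : η < ξ) => if 0 < η then (f η).top else 0) η hlt
  rwa [if_pos h0] at this

theorem del_le (hb : ∀ η, 0 < η → η < ξ → (f η).top ≤ μ) : del f ξ ≤ μ := by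
  refine Ordinal.bsup_le fun i hi => ?_
  by_cases h0 : 0 < i
  · rw [if_pos h0]; exact hb i h0 hi
  · rw [if_neg h0]; exact zero_le

theorem lt_del (h : μ < del f ξ) : ∃ ν, 0 < ν ∧ ν < ξ ∧ μ < (f ν).top := by
  obtain ⟨i, hi, hlt⟩ := (Ordinal.lt_bsup _).mp h
  by_cases h0 : 0 < i
  · rw [if_pos h0] at hlt; exact ⟨i, h0, hi, hlt⟩
  · rw [if_neg h0] at hlt; exact absurd hlt not_lt_zero

theorem del_mono (h : η ≤ ξ) : del f η ≤ del f ξ :=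
  del_le fun ν h0 hν => top_le_del h0 (lt_of_lt_of_le hν h)

theorem del_lt_gam : del f ξ < gam f ξ := by
  have := add_lt_add_right Ordinal.omega0_pos (del f ξ)
  simpa [gam] using this

theorem del_lt_ord (hreg : kap.IsRegular) (hξ : ξ < kap.ord) : del f ξ < kap.ord := by
  refine Cardinal.bsup_lt_ord_of_isRegular hreg (Cardinal.lt_ord.mp hξ) fun i hi => ?_
  by_cases h0 : 0 < i
  · rw [if_pos h0]; exact (f i).top_lt
  · rw [if_neg h0]; exact Cardinal.IsRegular.pos hreg |> fun h => by
      rwa [Cardinal.lt_ord, Ordinal.card_zero]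

theorem gam_lt_ord (hreg : kap.IsRegular) (hunc : ℵ₀ < kap) (hξ : ξ < kap.ord) :
    gam f ξ < kap.ord := by
  rw [Cardinal.lt_ord, gam, Ordinal.card_add, Ordinal.card_omega0]
  exact Cardinal.add_lt_of_lt hunc.le (Cardinal.lt_ord.mp (del_lt_ord hreg hξ)) hunc

theorem between_del_gam (h1 : del f ξ ≤ β) (h2 : β < gam f ξ) :
    β = del f ξ ∨ ∃ n : ℕ, β = del f ξ + (n + 1) := by
  have hc : del f ξ + (β - del f ξ) = β := Ordinal.add_sub_cancel_of_le h1
  have hlt : β - del f ξ < Ordinal.omega0 := by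
    have : del f ξ + (β - del f ξ) < del f ξ + Ordinal.omega0 := by rw [hc]; exact h2
    exact (add_lt_add_iff_left _).mp this
  obtain ⟨n, hn⟩ := Ordinal.lt_omega0.mp hlt
  cases n with
  | zero => left; rw [← hc, hn]; simp
  | succ k => right; exact ⟨k, by rw [← hc, hn]; norm_num⟩

theorem not_isLimit_between (h1 : del f ξ < β) (h2 : β < gam f ξ) : ¬ Order.IsSuccLimit β := by
  rcases between_del_gam h1.le h2 with h | ⟨n, rfl⟩
  · exact absurd h h1.ne'
  · intro hl
    have : del f ξ + ((n : Ordinal) + 1) = Order.succ (del f ξ + n) := by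
      rw [← add_assoc, Ordinal.add_one_eq_succ]
    rw [this] at hl
    exact Order.not_isSuccLimit_succ _ hl

theorem eq_gam_of_isLimit (h1 : del f ξ < β) (h2 : β ≤ gam f ξ) (hl : Order.IsSuccLimit β) :
    β = gam f ξ := by
  rcases h2.lt_or_eq with h | h
  · exact absurd hl (not_isLimit_between h1 h)
  · exact h

theorem tops_mono (hdec : Dec f ξ) (h0 : 0 < η) (h : η ≤ μ) (hμ : μ < ξ) :
    (f η).top ≤ (f μ).top := by
  rcases h.lt_or_eq with h | rfl
  · exact (hdec η μ h0 h hμ).1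
  · exact le_rfl

-- extensionality in f
theorem del_ext (h : ∀ ν < ξ, f ν = g ν) : del f ξ = del g ξ := by
  unfold del
  refine le_antisymm (Ordinal.bsup_le fun i hi => ?_) (Ordinal.bsup_le fun i hi => ?_) <;>
    [rw [h i hi]; rw [← h i hi]] <;>
    exact Ordinal.le_bsup _ i hi

theorem gam_ext (h : ∀ ν < ξ, f ν = g ν) : gam f ξ = gam g ξ := by
  unfold gam; rw [del_ext h]

theorem Eset_ext (h : ∀ ν < ξ, f ν = g ν) : Eset f ξ = Eset g ξ := by
  have hd : ∀ η ≤ ξ, del f η = del g η := fun η hη =>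
    del_ext fun ν hν => h ν (lt_of_lt_of_le hν hη)
  have hg : ∀ η ≤ ξ, gam f η = gam g η := fun η hη => by unfold gam; rw [hd η hη]
  unfold Eset
  ext β
  constructor
  · rintro (⟨η, h1, h2, h3, h4, h5⟩ | ⟨h1, h2⟩)
    · exact Or.inl ⟨η, h1, h2, h3, by rwa [← hd η h2.le], by rwa [← hg η h2.le]⟩
    · exact Or.inr ⟨by rwa [← hd ξ le_rfl], by rwa [← hg ξ le_rfl]⟩
  · rintro (⟨η, h1, h2, h3, h4, h5⟩ | ⟨h1, h2⟩)
    · exact Or.inl ⟨η, h1, h2, h3, by rwa [hd η h2.le], by rwa [hg η h2.le]⟩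
    · exact Or.inr ⟨by rwa [hd ξ le_rfl], by rwa [hg ξ le_rfl]⟩

theorem Fresh_ext (h : ∀ ν < ξ, f ν = g ν) : Fresh f ξ ↔ Fresh g ξ := by
  unfold Fresh
  rw [del_ext h]
  exact forall_congr' fun ν => by
    constructor <;> intro hh h0 hν <;> [rw [← h ν hν]; rw [h ν hν]] <;> exact hh h0 hν

theorem Dec_ext (h : ∀ ν < ξ, f ν = g ν) : Dec f ξ ↔ Dec g ξ := by
  unfold Dec
  constructor <;> intro hh η₁ η₂ h0 h12 h2 <;>
    [rw [← h η₁ (h12.trans h2), ← h η₂ h2]; rw [h η₁ (h12.trans h2), h η₂ h2]] <;>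
    exact hh η₁ η₂ h0 h12 h2

theorem Inv_ext (h : ∀ ν < ξ, f ν = g ν) : Inv f ξ ↔ Inv g ξ := by
  unfold Inv
  refine forall_congr' fun η => ?_
  constructor <;> intro hh h0 hη he
  · have hd := del_ext (f := f) (g := g) fun ν hν => h ν (hν.trans hη)
    have hgm := gam_ext (f := f) (g := g) fun ν hν => h ν (hν.trans hη)
    have hE := Eset_ext (f := f) (g := g) fun ν hν => h ν (hν.trans hη)
    have hF := Fresh_ext (f := f) (g := g) fun ν hν => h ν (hν.trans hη)
    rw [← h η hη, ← hd, ← hgm, ← hE]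
    exact ⟨(hh h0 hη he).1, (hh h0 hη he).2.1, fun hf => (hh h0 hη he).2.2 (hF.mpr hf)⟩
  · have hd := del_ext (f := f) (g := g) fun ν hν => h ν (hν.trans hη)
    have hgm := gam_ext (f := f) (g := g) fun ν hν => h ν (hν.trans hη)
    have hE := Eset_ext (f := f) (g := g) fun ν hν => h ν (hν.trans hη)
    have hF := Fresh_ext (f := f) (g := g) fun ν hν => h ν (hν.trans hη)
    rw [h η hη, hd, hgm, hE]
    exact ⟨(hh h0 hη he).1, (hh h0 hη he).2.1, fun hf => (hh h0 hη he).2.2 (hF.mp hf)⟩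

theorem Good_ext (h : ∀ ν < ξ, f ν = g ν) : Good f ξ ↔ Good g ξ := by
  unfold Good
  rw [Dec_ext h, Inv_ext h]

end Strat

section Strat2

variable {kap lam : Cardinal.{0}} {f : Ordinal → QCond kap lam} {ξ η μ ν β : Ordinal}

theorem gam_le_del (hinv : Inv f ξ) (h0 : 0 < η) (hη : η < ξ) (he : EvenOrd η) :
    gam f η ≤ del f ξ := by
  rw [← (hinv η h0 hη he).1]
  exact top_le_del h0 hη

/-- The blocks of `Eset f ξ` below `gam f η` are exactly `Eset f η`. -/
theorem Eset_inter_gam (hinv : Inv f ξ) (h0 : 0 < η) (hη : η < ξ) (he : EvenOrd η) :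
    Eset f ξ ∩ Set.Iio (gam f η) = Eset f η := by
  ext β
  constructor
  · rintro ⟨hmem | hmem, hβ : β < gam f η⟩
    · obtain ⟨μ, hμ0, hμξ, hμe, hμ1, hμ2⟩ := hmem
      rcases lt_trichotomy μ η with h | rfl | h
      · exact Or.inl ⟨μ, hμ0, h, hμe, hμ1, hμ2⟩
      · exact Or.inr ⟨hμ1, hβ⟩
      · have : gam f η ≤ del f μ := by
          rw [← (hinv η h0 hη he).1]
          exact top_le_del h0 h
        exact absurd (lt_of_le_of_lt (this.trans hμ1) hβ) (lt_irrefl _)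
    · have : gam f η ≤ del f ξ := gam_le_del hinv h0 hη he
      exact absurd (lt_of_le_of_lt (this.trans hmem.1) hβ) (lt_irrefl _)
  · rintro (hmem | hmem)
    · obtain ⟨μ, hμ0, hμη, hμe, hμ1, hμ2⟩ := hmem
      have hβ : β < gam f η := by
        have h1 : gam f μ = (f μ).top := ((hinv μ hμ0 (hμη.trans hη) hμe).1).symm
        have h2 : (f μ).top ≤ del f η := top_le_del hμ0 hμη
        exact lt_of_le_of_lt (hμ2.trans (h1 ▸ h2)) del_lt_gam
      exact ⟨Or.inl ⟨μ, hμ0, hμη.trans hη, hμe, hμ1, hμ2⟩, hβ⟩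
    · exact ⟨Or.inl ⟨η, h0, hη, he, hmem.1, hmem.2.le⟩, hmem.2⟩

/-- Below a fresh `del f η`, the blocks of `Eset f ξ` and of `Eset f η` agree. -/
theorem Eset_inter_del (hinv : Inv f ξ) (h0 : 0 < η) (hη : η ≤ ξ) (hfresh : Fresh f η) :
    Eset f ξ ∩ Set.Iio (del f η) = Eset f η ∩ Set.Iio (del f η) := by
  have key : ∀ ζ, η ≤ ζ → ζ ≤ ξ →
      Eset f ζ ∩ Set.Iio (del f η) =
        {β | ∃ μ, 0 < μ ∧ μ < η ∧ EvenOrd μ ∧ del f μ ≤ β ∧ β ≤ gam f μ} := by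
    intro ζ hηζ hζξ
    ext β
    constructor
    · rintro ⟨hmem | hmem, hβ : β < del f η⟩
      · obtain ⟨μ, hμ0, hμζ, hμe, hμ1, hμ2⟩ := hmem
        rcases lt_or_ge μ η with h | h
        · exact ⟨μ, hμ0, h, hμe, hμ1, hμ2⟩
        · exact absurd (lt_of_le_of_lt ((del_mono h).trans hμ1) hβ) (lt_irrefl _)
      · exact absurd (lt_of_le_of_lt ((del_mono hηζ).trans hmem.1) hβ) (lt_irrefl _)
    · rintro ⟨μ, hμ0, hμη, hμe, hμ1, hμ2⟩
      have hμξ : μ < ξ := lt_of_lt_of_le hμη hη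
      have hβ : β < del f η := by
        have h1 : gam f μ = (f μ).top := ((hinv μ hμ0 hμξ hμe).1).symm
        exact lt_of_le_of_lt (hμ2.trans h1.le) (hfresh μ hμ0 hμη)
      exact ⟨Or.inl ⟨μ, hμ0, lt_of_lt_of_le hμη hηζ, hμe, hμ1, hμ2⟩, hβ⟩
  rw [key ξ hη le_rfl, key η le_rfl hη]

/-- Classification of the "limit points" of `Eset f ξ`:
closure, and every limit-ordinal limit point is a `gam` or a fresh `del`. -/
theorem Eset_classify (hdec : Dec f ξ) (hinv : Inv f ξ) (hξ0 : 0 < ξ) (hξe : EvenOrd ξ)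
    {γ' : Ordinal} (h1 : 0 < γ') (h2 : γ' < gam f ξ)
    (h3 : sSup (Eset f ξ ∩ Set.Iio γ') = γ') :
    γ' ∈ Eset f ξ ∧ (Order.IsSuccLimit γ' →
      (∃ η, 0 < η ∧ η < ξ ∧ EvenOrd η ∧ γ' = gam f η) ∨
      (∃ η, 0 < η ∧ η ≤ ξ ∧ EvenOrd η ∧ γ' = del f η ∧ Fresh f η)) := by
  classical
  set S : Set Ordinal := {η | 0 < η ∧ η ≤ ξ ∧ EvenOrd η ∧ del f η < γ'} with hS
  have hbddS : BddAbove S := ⟨ξ, fun η hη => hη.2.1⟩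
  have hne : (Eset f ξ ∩ Set.Iio γ').Nonempty := by
    rcases Set.eq_empty_or_nonempty (Eset f ξ ∩ Set.Iio γ') with he | hne
    · rw [he, csSup_empty] at h3
      exact absurd h3.symm h1.ne'
    · exact hne
  have hblock : ∀ β ∈ Eset f ξ ∩ Set.Iio γ',
      ∃ η, η ∈ S ∧ del f η ≤ β ∧ (β ≤ gam f η ∧ (η < ξ ∨ η = ξ)) := by
    rintro β ⟨hmem | hmem, hβ : β < γ'⟩
    · obtain ⟨μ, hμ0, hμξ, hμe, hμ1, hμ2⟩ := hmem
      exact ⟨μ, ⟨hμ0, hμξ.le, hμe, lt_of_le_of_lt hμ1 hβ⟩, hμ1, hμ2, Or.inl hμξ⟩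
    · exact ⟨ξ, ⟨hξ0, le_rfl, hξe, lt_of_le_of_lt hmem.1 hβ⟩, hmem.1, hmem.2.le, Or.inr rfl⟩
  have hSne : S.Nonempty := by
    obtain ⟨β, hβ⟩ := hne
    obtain ⟨η, hη, _⟩ := hblock β hβ
    exact ⟨η, hη⟩
  obtain ⟨η', hη'⟩ : ∃ x, x = sSup S := ⟨_, rfl⟩
  have hleS : ∀ {η}, η ∈ S → η ≤ η' := fun {η} h => by rw [hη']; exact le_csSup hbddS h
  have hexS : ∀ {a}, a < η' → ∃ η ∈ S, a < η := fun {a} ha =>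
    exists_lt_of_lt_csSup hSne (by rwa [← hη'])
  have hSle : η' ≤ ξ := by rw [hη']; exact csSup_le hSne fun η hη => hη.2.1
  by_cases hmem : η' ∈ S
  · obtain ⟨hη'0, hη'ξ, hη'e, hη'del⟩ := hmem
    rcases le_or_gt γ' (gam f η') with hle | hlt
    · -- γ' lies in the block of η'
      have hγ'mem : γ' ∈ Eset f ξ := by
        rcases hη'ξ.lt_or_eq with h | rfl
        · exact Or.inl ⟨η', hη'0, h, hη'e, hη'del.le, hle⟩
        · exact Or.inr ⟨hη'del.le, h2⟩
      refine ⟨hγ'mem, fun hγlim => ?_⟩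
      have hγ'gam : γ' = gam f η' := eq_gam_of_isLimit hη'del hle hγlim
      rcases hη'ξ.lt_or_eq with h | rfl
      · exact Or.inl ⟨η', hη'0, h, hη'e, hγ'gam⟩
      · exact absurd (hγ'gam ▸ h2) (lt_irrefl _)
    · -- impossible: the sup would be at most gam f η'
      exfalso
      have hbound : ∀ β ∈ Eset f ξ ∩ Set.Iio γ', β ≤ gam f η' := by
        intro β hβ
        obtain ⟨η, hηS, _, hβ2, hcase⟩ := hblock β hβ
        have hηη' : η ≤ η' := hleS hηS
        rcases hηη'.lt_or_eq with h | rfl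
        · have hηξ : η < ξ := lt_of_lt_of_le h hη'ξ
          have : gam f η ≤ del f η' := gam_le_del (ξ := η') (fun a b c d => hinv a b (lt_of_lt_of_le c hη'ξ) d) hηS.1 h hηS.2.2.1
          exact hβ2.trans (this.trans del_lt_gam.le)
        · exact hβ2
      have := csSup_le hne hbound
      rw [h3] at this
      exact absurd this (not_le.mpr hlt)
  · -- sup of S is a fresh del
    have hη'lim : Order.IsSuccLimit η' := by
      obtain ⟨η₀, hη₀⟩ := hSne
      refine Ordinal.isSuccLimit_iff.mpr ⟨?_, Order.isSuccPrelimit_iff_succ_lt.mpr fun a ha => ?_⟩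
      · have : η₀ ≤ η' := hleS hη₀
        exact fun h0 => absurd (h0 ▸ this) (not_le.mpr hη₀.1)
      · obtain ⟨η, hηS, hη⟩ := hexS ha
        have h1 : η ≤ η' := hleS hηS
        have h2 : η ≠ η' := fun h => hmem (h ▸ hηS)
        exact lt_of_le_of_lt (Order.succ_le_iff.mpr hη) (h1.lt_of_ne h2)
    have hη'0 : 0 < η' := hη'lim.pos
    have hη'ξ : η' ≤ ξ := hSle
    have hη'e : EvenOrd η' := evenOrd_of_isLimit hη'lim
    have htople : ∀ ν, 0 < ν → ν < η' → (f ν).top < γ' := by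
      intro ν hν0 hν
      obtain ⟨η, hηS, hη⟩ := hexS hν
      exact lt_of_le_of_lt (top_le_del hν0 hη) hηS.2.2.2
    have hdelle : del f η' ≤ γ' := del_le fun ν h0 hν => (htople ν h0 hν).le
    have hdelge : γ' ≤ del f η' := by
      by_contra h
      exact hmem ⟨hη'0, hη'ξ, hη'e, not_le.mp h⟩
    have hdeleq : γ' = del f η' := le_antisymm hdelge hdelle
    have hfresh : Fresh f η' := fun ν h0 hν => hdeleq ▸ htople ν h0 hν
    have hγ'mem : γ' ∈ Eset f ξ := by
      rcases hη'ξ.lt_or_eq with h | rfl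
      · exact Or.inl ⟨η', hη'0, h, hη'e, hdeleq.ge, hdeleq.le.trans del_lt_gam.le⟩
      · exact Or.inr ⟨hdeleq.ge, h2⟩
    exact ⟨hγ'mem, fun _ => Or.inr ⟨η', hη'0, hη'ξ, hη'e, hdeleq, hfresh⟩⟩

end Strat2

section Strat3

variable {kap lam : Cardinal.{0}} {f : Ordinal → QCond kap lam} {ξ η μ ν α β : Ordinal}

theorem Eset_club (hdec : Dec f ξ) (hinv : Inv f ξ) (hξ0 : 0 < ξ) (hξe : EvenOrd ξ) :
    IsClubIn (Eset f ξ) (gam f ξ) := by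
  refine ⟨?_, ?_, ?_⟩
  · rintro β (⟨η, h0, hη, he, _, h5⟩ | hmem)
    · exact lt_of_le_of_lt (h5.trans (gam_le_del hinv h0 hη he)) del_lt_gam
    · exact hmem.2
  · intro γ' hγ'
    rcases le_or_gt γ' (del f ξ) with h | h
    · exact ⟨del f ξ, Or.inr ⟨le_rfl, del_lt_gam⟩, h⟩
    · exact ⟨γ', Or.inr ⟨h.le, hγ'⟩, le_rfl⟩
  · intro γ' hγ' h0 hsup
    exact (Eset_classify hdec hinv hξ0 hξe h0 hγ' hsup).1

theorem fresh_isLimit (hdec : Dec f ξ) (hξ0 : 0 < ξ) (hξe : EvenOrd ξ)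
    (hfresh : Fresh f ξ) : Order.IsSuccLimit ξ := by
  rcases Ordinal.zero_or_succ_or_isSuccLimit ξ with rfl | ⟨ζ, rfl⟩ | hl
  · exact absurd rfl hξ0.ne'
  · exfalso
    have hζ0 : 0 < ζ := by
      rcases eq_zero_or_pos ζ with rfl | h
      · rw [Ordinal.succ_zero] at hξe
        exact absurd hξe not_evenOrd_one
      · exact h
    have hζξ : ζ < Order.succ ζ := Order.lt_succ ζ
    have hdle : del f (Order.succ ζ) ≤ (f ζ).top :=
      del_le fun ν' h0 hν' => tops_mono hdec h0 (Order.lt_succ_iff.mp hν') hζξ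
    exact absurd (hfresh ζ hζ0 hζξ) (not_lt.mpr hdle)
  · exact hl

theorem add_two_eq_succ_succ : ν + 2 = Order.succ (Order.succ ν) := by
  rw [show (2 : Ordinal) = 1 + 1 from one_add_one_eq_two.symm, ← add_assoc,
    Ordinal.add_one_eq_succ, Ordinal.add_one_eq_succ]

theorem Eset_inter_club (hdec : Dec f ξ) (hinv : Inv f ξ) (hξ0 : 0 < ξ) (hξe : EvenOrd ξ)
    (hfresh : Fresh f ξ) : IsClubIn (Eset f ξ ∩ Set.Iio (del f ξ)) (del f ξ) := by
  have hξlim : Order.IsSuccLimit ξ := fresh_isLimit hdec hξ0 hξe hfresh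
  refine ⟨fun β hβ => hβ.2, ?_, ?_⟩
  · intro γ' hγ'
    obtain ⟨ν', hν0, hνξ, hνtop⟩ := lt_del hγ'
    obtain ⟨μ', hμe, hνμ, hμξ⟩ :
        ∃ μ', EvenOrd μ' ∧ ν' < μ' ∧ μ' < ξ := by
      rcases evenOrd_or_succ ν' with he | he
      · refine ⟨ν' + 2, evenOrd_add_two he, ?_, ?_⟩
        · rw [add_two_eq_succ_succ]
          exact lt_trans (Order.lt_succ ν') (Order.lt_succ _)
        · rw [add_two_eq_succ_succ]
          exact hξlim.succ_lt (hξlim.succ_lt hνξ)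
      · refine ⟨ν' + 1, he, ?_, ?_⟩
        · rw [Ordinal.add_one_eq_succ]; exact Order.lt_succ ν'
        · rw [Ordinal.add_one_eq_succ]; exact hξlim.succ_lt hνξ
    have hμ0 : 0 < μ' := lt_trans hν0 hνμ
    refine ⟨del f μ', ⟨Or.inl ⟨μ', hμ0, hμξ, hμe, le_rfl, del_lt_gam.le⟩, ?_⟩, ?_⟩
    · have h1 : del f μ' < (f μ').top := by
        rw [(hinv μ' hμ0 hμξ hμe).1]; exact del_lt_gam
      exact lt_trans h1 (hfresh μ' hμ0 hμξ)
    · exact le_trans hνtop.le (top_le_del hν0 hνμ)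
  · intro γ' hγ' h0 hsup
    have hseteq : Eset f ξ ∩ Set.Iio (del f ξ) ∩ Set.Iio γ' = Eset f ξ ∩ Set.Iio γ' := by
      rw [Set.inter_assoc, Set.Iio_inter_Iio, min_eq_right hγ'.le]
    rw [hseteq] at hsup
    exact ⟨(Eset_classify hdec hinv hξ0 hξe h0 (lt_trans hγ' del_lt_gam) hsup).1, hγ'⟩

open Classical in
def buildC (f : Ordinal → QCond kap lam) (ξ : Ordinal) : Ordinal → Set (Set Ordinal) :=
  fun α =>
    if h : ∃ η, 0 < η ∧ η < ξ ∧ α ≤ (f η).top then (f h.choose).C α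
    else if α = del f ξ then {Eset f ξ ∩ Set.Iio (del f ξ)} else {Eset f ξ}

theorem buildC_old (hdec : Dec f ξ) (hαlim : Order.IsSuccLimit α) (h0 : 0 < η) (hη : η < ξ)
    (hle : α ≤ (f η).top) : buildC f ξ α = (f η).C α := by
  have h : ∃ η, 0 < η ∧ η < ξ ∧ α ≤ (f η).top := ⟨η, h0, hη, hle⟩
  unfold buildC
  rw [dif_pos h]
  obtain ⟨c0, c1, c2⟩ := h.choose_spec
  rcases le_total h.choose η with h' | h'
  · rcases h'.lt_or_eq with h'' | rfl
    · exact ((hdec _ _ c0 h'' hη).2 α c2 hαlim).symm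
    · rfl
  · rcases h'.lt_or_eq with h'' | rfl
    · exact (hdec _ _ h0 h'' c1).2 α hle hαlim
    · rfl
end Strat3

section Strat4

variable {kap lam : Cardinal.{0}} {f : Ordinal → QCond kap lam} {ξ η μ ν α β : Ordinal}

theorem buildC_gam : buildC f ξ (gam f ξ) = {Eset f ξ} := by
  have h : ¬ ∃ η, 0 < η ∧ η < ξ ∧ gam f ξ ≤ (f η).top := by
    rintro ⟨η, h0, hη, hle⟩
    exact absurd (lt_of_le_of_lt (hle.trans (top_le_del h0 hη)) del_lt_gam) (lt_irrefl _)
  unfold buildC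
  rw [dif_neg h, if_neg (ne_of_gt del_lt_gam)]

theorem buildC_del (hfresh : Fresh f ξ) :
    buildC f ξ (del f ξ) = {Eset f ξ ∩ Set.Iio (del f ξ)} := by
  have h : ¬ ∃ η, 0 < η ∧ η < ξ ∧ del f ξ ≤ (f η).top := by
    rintro ⟨η, h0, hη, hle⟩
    exact absurd (hfresh η h0 hη) (not_lt.mpr hle)
  unfold buildC
  rw [dif_neg h, if_pos rfl]

theorem coherenceAtE (h1 : 1 < lam) (hG : Good f ξ) (hαlim : Order.IsSuccLimit α) (hα : α < gam f ξ)
    (hsup : sSup (Eset f ξ ∩ Set.Iio α) = α) : Eset f ξ ∩ Set.Iio α ∈ buildC f ξ α := by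
  obtain ⟨hξ0, hξord, hξe, hdec, hinv⟩ := hG
  obtain ⟨-, hcls⟩ := Eset_classify hdec hinv hξ0 hξe hαlim.pos hα hsup
  rcases hcls hαlim with ⟨η, h0, hη, he, rfl⟩ | ⟨η, h0, hη, he, rfl, hfresh⟩
  · have htop : (f η).top = gam f η := (hinv η h0 hη he).1
    rw [buildC_old hdec hαlim h0 hη htop.ge, (hinv η h0 hη he).2.1,
      Eset_inter_gam hinv h0 hη he]
    exact Set.mem_singleton _
  · rcases hη.lt_or_eq with hηξ | rfl
    · have htop : (f η).top = gam f η := (hinv η h0 hηξ he).1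
      have hle : del f η ≤ (f η).top := htop ▸ del_lt_gam.le
      rw [buildC_old hdec hαlim h0 hηξ hle, (hinv η h0 hηξ he).2.2 hfresh,
        Eset_inter_del hinv h0 hηξ.le hfresh]
      exact Set.mem_singleton _
    · rw [buildC_del hfresh]
      exact Set.mem_singleton _

theorem build_clubs (h1 : 1 < lam) (hG : Good f ξ) :
    ∀ α ≤ gam f ξ, Order.IsSuccLimit α →
      (buildC f ξ α).Nonempty ∧ (∀ c ∈ buildC f ξ α, IsClubIn c α) ∧
        #(buildC f ξ α) < Cardinal.lift.{1} lam := by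
  obtain ⟨hξ0, hξord, hξe, hdec, hinv⟩ := hG
  intro α hαle hαlim
  by_cases h : ∃ η, 0 < η ∧ η < ξ ∧ α ≤ (f η).top
  · obtain ⟨η, h0, hη, hle⟩ := h
    rw [buildC_old hdec hαlim h0 hη hle]
    exact (f η).clubs α hle hαlim
  · have hfr : ∀ ν, 0 < ν → ν < ξ → (f ν).top < α := by
      intro ν h0 hν
      by_contra h'
      exact h ⟨ν, h0, hν, not_lt.mp h'⟩
    have hαnotlt : ¬ α < del f ξ := by
      intro h'
      obtain ⟨ν, h0, hν, htop⟩ := lt_del h'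
      exact absurd (hfr ν h0 hν) (not_lt.mpr htop.le)
    rcases eq_or_lt_of_le hαle with rfl | hαlt
    · rw [buildC_gam]
      refine ⟨⟨_, Set.mem_singleton _⟩, ?_, ?_⟩
      · intro c hc
        rw [Set.mem_singleton_iff] at hc
        subst hc
        exact Eset_club hdec hinv hξ0 hξe
      · rw [Cardinal.mk_singleton]
        exact one_lt_lift h1
    · have hαdel : α = del f ξ := by
        rcases (not_lt.mp hαnotlt).lt_or_eq with h' | h'
        · exact absurd hαlim (not_isLimit_between h' hαlt)
        · exact h'.symm
      subst hαdel
      have hfresh : Fresh f ξ := hfr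
      rw [buildC_del hfresh]
      refine ⟨⟨_, Set.mem_singleton _⟩, ?_, ?_⟩
      · intro c hc
        rw [Set.mem_singleton_iff] at hc
        subst hc
        exact Eset_inter_club hdec hinv hξ0 hξe hfresh
      · rw [Cardinal.mk_singleton]
        exact one_lt_lift h1

theorem build_coherent (h1 : 1 < lam) (hG : Good f ξ) :
    ∀ α β, α < β → β ≤ gam f ξ → Order.IsSuccLimit α → Order.IsSuccLimit β →
      ∀ c ∈ buildC f ξ β, IsLimitPt α c → c ∩ Set.Iio α ∈ buildC f ξ α := by
  have hξ0 := hG.1; have hξe := hG.2.2.1; have hdec := hG.2.2.2.1; have hinv := hG.2.2.2.2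
  intro α β hαβ hβle hαlim hβlim c hc hlp
  by_cases h : ∃ η, 0 < η ∧ η < ξ ∧ β ≤ (f η).top
  · obtain ⟨η, h0, hη, hle⟩ := h
    rw [buildC_old hdec hβlim h0 hη hle] at hc
    have hres := (f η).coherent α β hαβ hle hαlim hβlim c hc hlp
    rw [buildC_old hdec hαlim h0 hη (hαβ.le.trans hle)]
    exact hres
  · have hfr : ∀ ν, 0 < ν → ν < ξ → (f ν).top < β := by
      intro ν h0 hν
      by_contra h'
      exact h ⟨ν, h0, hν, not_lt.mp h'⟩
    have hβnotlt : ¬ β < del f ξ := by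
      intro h'
      obtain ⟨ν, h0, hν, htop⟩ := lt_del h'
      exact absurd (hfr ν h0 hν) (not_lt.mpr htop.le)
    rcases eq_or_lt_of_le hβle with rfl | hβlt
    · rw [buildC_gam] at hc
      rw [Set.mem_singleton_iff] at hc
      subst hc
      exact coherenceAtE h1 hG hαlim hαβ hlp.2
    · have hβdel : β = del f ξ := by
        rcases (not_lt.mp hβnotlt).lt_or_eq with h' | h'
        · exact absurd hβlim (not_isLimit_between h' hβlt)
        · exact h'.symm
      subst hβdel
      have hfresh : Fresh f ξ := hfr
      rw [buildC_del hfresh] at hc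
      rw [Set.mem_singleton_iff] at hc
      subst hc
      have hseteq : Eset f ξ ∩ Set.Iio (del f ξ) ∩ Set.Iio α = Eset f ξ ∩ Set.Iio α := by
        rw [Set.inter_assoc, Set.Iio_inter_Iio, min_eq_right hαβ.le]
      rw [hseteq]
      have hsup := hlp.2
      rw [hseteq] at hsup
      exact coherenceAtE h1 hG hαlim (lt_trans hαβ del_lt_gam) hsup

def buildQ (h1 : 1 < lam) (hreg : kap.IsRegular) (hunc : ℵ₀ < kap)
    (f : Ordinal → QCond kap lam) (ξ : Ordinal) (hG : Good f ξ) : QCond kap lam where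
  top := gam f ξ
  C := buildC f ξ
  top_lt := gam_lt_ord hreg hunc hG.2.1
  clubs := build_clubs h1 hG
  coherent := build_coherent h1 hG

theorem buildQ_ext (h1 : 1 < lam) (hreg : kap.IsRegular) (hunc : ℵ₀ < kap) (hG : Good f ξ) :
    ∀ η, 0 < η → η < ξ → QExt (buildQ h1 hreg hunc f ξ hG) (f η) := fun η h0 hη =>
  ⟨(top_le_del h0 hη).trans del_lt_gam.le,
    fun α hα hl => buildC_old hG.2.2.2.1 hl h0 hη hα⟩

end Strat4

section Strat5

variable {kap lam : Cardinal.{0}}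

def defaultQ (hk : (0 : Ordinal) < kap.ord) : QCond kap lam where
  top := 0
  C := fun _ => ∅
  top_lt := hk
  clubs := by
    intro α hα hl
    rw [nonpos_iff_eq_zero.mp hα] at hl
    exact absurd hl Ordinal.not_isSuccLimit_zero
  coherent := by
    intro α β hαβ hβle hαl hβl
    rw [nonpos_iff_eq_zero.mp hβle] at hβl
    exact absurd hβl Ordinal.not_isSuccLimit_zero

open Classical in
def restrict (f : Ordinal → QCond kap lam) (ξ : Ordinal) (d : QCond kap lam) :
    Ordinal → QCond kap lam := fun η => if η < ξ then f η else d

open Classical in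
def sigma (h1 : 1 < lam) (hreg : kap.IsRegular) (hunc : ℵ₀ < kap)
    (hk : (0 : Ordinal) < kap.ord) :
    (Ordinal → QCond kap lam) → Ordinal → QCond kap lam := fun f ξ =>
  if h : Good (restrict f ξ (defaultQ hk)) ξ then buildQ h1 hreg hunc _ ξ h else defaultQ hk

theorem sigma_ext (h1 : 1 < lam) (hreg : kap.IsRegular) (hunc : ℵ₀ < kap)
    (hk : (0 : Ordinal) < kap.ord) (f g : Ordinal → QCond kap lam) (ξ : Ordinal)
    (h : ∀ η < ξ, f η = g η) :
    sigma h1 hreg hunc hk f ξ = sigma h1 hreg hunc hk g ξ := by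
  have hr : restrict f ξ (defaultQ hk) = restrict g ξ (defaultQ hk) := by
    funext η
    unfold restrict
    by_cases hη : η < ξ
    · rw [if_pos hη, if_pos hη]; exact h η hη
    · rw [if_neg hη, if_neg hη]
  unfold sigma
  rw [hr]

theorem sigma_win (h1 : 1 < lam) (hreg : kap.IsRegular) (hunc : ℵ₀ < kap)
    (hk : (0 : Ordinal) < kap.ord) (f : Ordinal → QCond kap lam) (ξ : Ordinal)
    (hξ0 : 0 < ξ) (hξord : ξ < kap.ord) (hξe : EvenOrd ξ)
    (hdec : ∀ η₁ η₂, 0 < η₁ → η₁ < η₂ → η₂ < ξ → QExt (f η₂) (f η₁))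
    (hfol : ∀ η, 0 < η → η < ξ → EvenOrd η → f η = sigma h1 hreg hunc hk f η) :
    ∀ η, 0 < η → η < ξ → QExt (sigma h1 hreg hunc hk f ξ) (f η) := by
  have key : ∀ ζ, ζ ≤ ξ → 0 < ζ → EvenOrd ζ → Good f ζ := by
    intro ζ
    induction ζ using Ordinal.induction with
    | _ ζ IH =>
      intro hζξ hζ0 hζe
      refine ⟨hζ0, lt_of_le_of_lt hζξ hξord, hζe, ?_, ?_⟩
      · exact fun η₁ η₂ a b c => hdec η₁ η₂ a b (lt_of_lt_of_le c hζξ)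
      · intro μ hμ0 hμζ hμe
        have hμξ : μ < ξ := lt_of_lt_of_le hμζ hζξ
        have hGμ : Good f μ := IH μ hμζ hμξ.le hμ0 hμe
        have hagree : ∀ ν < μ, restrict f μ (defaultQ hk) ν = f ν := fun ν hν => if_pos hν
        have hGμ' : Good (restrict f μ (defaultQ hk)) μ := (Good_ext hagree).mpr hGμ
        have hfμ : f μ = buildQ h1 hreg hunc _ μ hGμ' := by
          rw [hfol μ hμ0 hμξ hμe]
          unfold sigma
          rw [dif_pos hGμ']
        have hdel : del (restrict f μ (defaultQ hk)) μ = del f μ := del_ext hagree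
        have hgam : gam (restrict f μ (defaultQ hk)) μ = gam f μ := gam_ext hagree
        have hE : Eset (restrict f μ (defaultQ hk)) μ = Eset f μ := Eset_ext hagree
        refine ⟨?_, ?_, ?_⟩
        · rw [hfμ]; exact hgam
        · rw [hfμ]
          show buildC (restrict f μ (defaultQ hk)) μ (gam f μ) = {Eset f μ}
          rw [← hgam, buildC_gam, hE]
        · intro hfresh
          have hfresh' : Fresh (restrict f μ (defaultQ hk)) μ := (Fresh_ext hagree).mpr hfresh
          rw [hfμ]
          show buildC (restrict f μ (defaultQ hk)) μ (del f μ) = _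
          rw [← hdel, buildC_del hfresh', hE, hdel]
  have hG : Good f ξ := key ξ le_rfl hξ0 hξe
  have hagree : ∀ ν < ξ, restrict f ξ (defaultQ hk) ν = f ν := fun ν hν => if_pos hν
  have hG' : Good (restrict f ξ (defaultQ hk)) ξ := (Good_ext hagree).mpr hG
  intro η hη0 hηξ
  have hext := buildQ_ext h1 hreg hunc hG' η hη0 hηξ
  rw [hagree η hηξ] at hext
  unfold sigma
  rw [dif_pos hG']
  exact hext

end Strat5

end Aux

/-- Proposition 3.18(1): for cardinals `1 < lam ≤ kap` with `kap` regular
and uncountable, the poset `ℚ(kap, <lam)` is `ω₁`-closed (every countable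
decreasing sequence of conditions has a lower bound) and `kap`-strategically
closed (Player II has a winning strategy in `G_kap(ℚ(kap, <lam))`). -/
theorem statement16 (lam kap : Cardinal.{0}) (h1 : 1 < lam) (h2 : lam ≤ kap)
    (hreg : kap.IsRegular) (hunc : ℵ₀ < kap) :
    (∀ f : ℕ → QCond kap lam, (∀ n, QExt (f (n + 1)) (f n)) →
      ∃ q : QCond kap lam, ∀ n, QExt q (f n)) ∧
    StratClosed (QCond kap lam) QExt kap.ord := by
  have hk : (0 : Ordinal) < kap.ord := Cardinal.lt_ord.mpr (by simpa using hreg.pos)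
  constructor
  · exact fun f hf => Aux.omega_closed h1 hreg hunc f hf
  · refine ⟨Aux.sigma h1 hreg hunc hk, ?_, ?_⟩
    · exact fun f g ξ h => Aux.sigma_ext h1 hreg hunc hk f g ξ h
    · intro f ξ h0 hβ he hdec hfol
      exact Aux.sigma_win h1 hreg hunc hk f ξ h0 hβ he hdec hfol


end Paper
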